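/- A posteriori upper bound for the embedding constant: let 0 ≤ ε* < 1 and 0 ≤ δ* ≤ 1, let V ⊆ U be a nonzero subspace, let Θ ∈ 𝕂^{k×n} be a fixed matrix, and let Θ* : Ω → 𝕂^{k*×n} be a random matrix such that for every fixed x ∈ V, the event {|‖x‖_U² − (‖x‖_U^{Θ*})²| ≤ ε* ‖x‖_U²} is measurable and has probability at least 1 − δ*. Then, with probability at least 1 − δ*, the following holds: if ‖x‖_U^{Θ*} > 0 for every nonzero x ∈ V and the quantity ω̄ := max{ 1 − (1−ε*)·min_{x ∈ V, x ≠ 0} (‖x‖_U^Θ/‖x‖_U^{Θ*})², (1+ε*)·max_{x ∈ V, x ≠ 0} (‖x‖_U^Θ/‖x‖_U^{Θ*})² − 1 } satisfies ω̄ < 1, then Θ is an ω̄-embedding for V. -/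

import Mathlib

open Matrix
open scoped ComplexOrder

noncomputable section

variable {𝕂 : Type*} [RCLike 𝕂]

/-- Canonical ℓ2 inner product on `𝕂^n` (conjugate-linear in the first argument). -/
def ip2 {n : ℕ} (x y : Fin n → 𝕂) : 𝕂 := star x ⬝ᵥ y

/-- Canonical ℓ2 norm on `𝕂^n`. -/
def norm2 {n : ℕ} (x : Fin n → 𝕂) : ℝ := Real.sqrt (RCLike.re (ip2 x x))

/-- Inner product `⟨x,y⟩_U := ⟨R x, y⟩` on `U = 𝕂^n`. -/
def ipU {n : ℕ} (R : Matrix (Fin n) (Fin n) 𝕂) (x y : Fin n → 𝕂) : 𝕂 := ip2 (R *ᵥ x) y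

/-- Norm `‖·‖_U` associated with `⟨·,·⟩_U`. -/
def normU {n : ℕ} (R : Matrix (Fin n) (Fin n) 𝕂) (x : Fin n → 𝕂) : ℝ :=
  Real.sqrt (RCLike.re (ipU R x x))

/-- Dual inner product `⟨x,y⟩_{U'} := ⟨x, R⁻¹ y⟩` on `U' = 𝕂^n`. -/
def ipDual {n : ℕ} (R : Matrix (Fin n) (Fin n) 𝕂) (x y : Fin n → 𝕂) : 𝕂 := ip2 x (R⁻¹ *ᵥ y)

/-- Dual norm `‖·‖_{U'}`. -/
def normDual {n : ℕ} (R : Matrix (Fin n) (Fin n) 𝕂) (x : Fin n → 𝕂) : ℝ :=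
  Real.sqrt (RCLike.re (ipDual R x x))

/-- Sketched semi-inner product `⟨x,y⟩_U^Θ := ⟨Θ x, Θ y⟩`. -/
def ipUS {n k : ℕ} (Θ : Matrix (Fin k) (Fin n) 𝕂) (x y : Fin n → 𝕂) : 𝕂 :=
  ip2 (Θ *ᵥ x) (Θ *ᵥ y)

/-- Sketched seminorm `‖·‖_U^Θ`. -/
def normUS {n k : ℕ} (Θ : Matrix (Fin k) (Fin n) 𝕂) (x : Fin n → 𝕂) : ℝ :=
  Real.sqrt (RCLike.re (ipUS Θ x x))

/-- Sketched dual seminorm `‖x‖_{U'}^Θ = ‖Θ R⁻¹ x‖`. -/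
def normDualS {n k : ℕ} (Θ : Matrix (Fin k) (Fin n) 𝕂) (R : Matrix (Fin n) (Fin n) 𝕂)
    (x : Fin n → 𝕂) : ℝ :=
  normUS Θ (R⁻¹ *ᵥ x)

/-- `Θ` is an `ε`-embedding for the subspace `V` of `U`. -/
def IsEmb {n k : ℕ} (R : Matrix (Fin n) (Fin n) 𝕂) (Θ : Matrix (Fin k) (Fin n) 𝕂)
    (V : Submodule 𝕂 (Fin n → 𝕂)) (ε : ℝ) : Prop :=
  ∀ x ∈ V, ∀ y ∈ V, ‖ipU R x y - ipUS Θ x y‖ ≤ ε * normU R x * normU R y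

/-- Distance (in `‖·‖_U`) from `v` to the subspace `W`; equals `‖v - P_W v‖_U`
where `P_W` is the `⟨·,·⟩_U`-orthogonal projection onto `W`. -/
def distU {n : ℕ} (R : Matrix (Fin n) (Fin n) 𝕂) (v : Fin n → 𝕂)
    (W : Submodule 𝕂 (Fin n → 𝕂)) : ℝ :=
  sInf {t | ∃ w ∈ W, t = normU R (v - w)}

/-- Set of ratios `num x / den x` over nonzero `x ∈ S`. -/
def ratioSet {n : ℕ} (S : Submodule 𝕂 (Fin n → 𝕂)) (num den : (Fin n → 𝕂) → ℝ) : Set ℝ :=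
  {t | ∃ x ∈ S, x ≠ 0 ∧ t = num x / den x}

/-- Library `L_r(D)` of all subspaces spanned by `r` vectors from the dictionary `D`. -/
def LrD {n : ℕ} (D : Finset (Fin n → 𝕂)) (r : ℕ) : Set (Submodule 𝕂 (Fin n → 𝕂)) :=
  {W | ∃ S : Finset (Fin n → 𝕂), S ⊆ D ∧ S.card = r ∧
    W = Submodule.span 𝕂 (S : Set (Fin n → 𝕂))}

/-- Set of ratios `num x / den x` over nonzero `x ∈ span{u} + W` with `W ∈ L_r(D)`. -/
def dictRatioSet {n : ℕ} (D : Finset (Fin n → 𝕂)) (r : ℕ) (u : Fin n → 𝕂)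
    (num den : (Fin n → 𝕂) → ℝ) : Set ℝ :=
  {t | ∃ W ∈ LrD D r, ∃ x ∈ Submodule.span 𝕂 {u} ⊔ W, x ≠ 0 ∧ t = num x / den x}

/-- The subspace `R_r(U_r) = span {R⁻¹ (b - A x) : x ∈ U_r}`. -/
def RrSub {n : ℕ} (R A : Matrix (Fin n) (Fin n) 𝕂) (b : Fin n → 𝕂)
    (Ur : Submodule 𝕂 (Fin n → 𝕂)) : Submodule 𝕂 (Fin n → 𝕂) :=
  Submodule.span 𝕂 {v | ∃ x ∈ Ur, v = R⁻¹ *ᵥ (b - A *ᵥ x)}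

/-- Dictionary-based `r`-width `σ_r(M; K)`. -/
def sigmaW {n : ℕ} (R : Matrix (Fin n) (Fin n) 𝕂) (M : Set (Fin n → 𝕂)) (r K : ℕ) : ℝ :=
  sInf {t | ∃ D : Finset (Fin n → 𝕂), D.card = K ∧
    t = sSup {s | ∃ v ∈ M, s = sInf {e | ∃ W ∈ LrD D r, e = distU R v W}}}

/-- Nonlinear Kolmogorov `r`-width `d_r(M; m)` with a library of `m` subspaces. -/
def dW {n : ℕ} (R : Matrix (Fin n) (Fin n) 𝕂) (M : Set (Fin n → 𝕂)) (r m : ℕ) : ℝ :=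
  sInf {t | ∃ L : Finset (Submodule 𝕂 (Fin n → 𝕂)), L.card = m ∧
    (∀ W ∈ L, Module.finrank 𝕂 ↥W ≤ r) ∧
    t = sSup {s | ∃ v ∈ M, s = sInf {e | ∃ W ∈ L, e = distU R v W}}}

/-- A posteriori estimator `ω̄` of the embedding constant of `Θ` for `V`,
computed from a second embedding `Θs`. -/
def omegaBar {n k ks : ℕ} (ε : ℝ) (Θ : Matrix (Fin k) (Fin n) 𝕂)
    (Θs : Matrix (Fin ks) (Fin n) 𝕂) (V : Submodule 𝕂 (Fin n → 𝕂)) : ℝ :=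
  max (1 - (1 - ε) * sInf {t | ∃ x ∈ V, x ≠ 0 ∧ t = (normUS Θ x / normUS Θs x) ^ 2})
      ((1 + ε) * sSup {t | ∃ x ∈ V, x ≠ 0 ∧ t = (normUS Θ x / normUS Θs x) ^ 2} - 1)


section aux
variable {n k : ℕ}

lemma ip2_conj (x y : Fin n → 𝕂) : ip2 y x = star (ip2 x y) := by
  simp [ip2, dotProduct, map_sum, mul_comm]

lemma ip2_add_left (x y z : Fin n → 𝕂) : ip2 (x + y) z = ip2 x z + ip2 y z := by
  simp [ip2, add_dotProduct]

lemma ip2_add_right (x y z : Fin n → 𝕂) : ip2 x (y + z) = ip2 x y + ip2 x z := by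
  simp [ip2, dotProduct_add]

lemma ip2_smul_left (c : 𝕂) (x y : Fin n → 𝕂) :
    ip2 (c • x) y = star c * ip2 x y := by
  simp [ip2, star_smul, smul_dotProduct, smul_eq_mul]

lemma ip2_smul_right (c : 𝕂) (x y : Fin n → 𝕂) :
    ip2 x (c • y) = c * ip2 x y := by
  simp [ip2, dotProduct_smul, smul_eq_mul]

lemma re_ip2_self_nonneg (x : Fin n → 𝕂) : 0 ≤ RCLike.re (ip2 x x) := by
  have : ip2 x x = ((∑ i, ‖x i‖ ^ 2 : ℝ) : 𝕂) := by
    push_cast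
    simp [ip2, dotProduct, RCLike.star_def, RCLike.conj_mul]
  rw [this, RCLike.ofReal_re]
  positivity
end aux

section aux2
variable {n k : ℕ} (R : Matrix (Fin n) (Fin n) 𝕂) (Θ : Matrix (Fin k) (Fin n) 𝕂)

lemma ipU_add_left (x y z : Fin n → 𝕂) : ipU R (x + y) z = ipU R x z + ipU R y z := by
  simp [ipU, mulVec_add, ip2_add_left]

lemma ipU_add_right (x y z : Fin n → 𝕂) : ipU R x (y + z) = ipU R x y + ipU R x z := by
  simp [ipU, ip2_add_right]

lemma ipU_smul_left (c : 𝕂) (x y : Fin n → 𝕂) : ipU R (c • x) y = star c * ipU R x y := by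
  simp [ipU, mulVec_smul, ip2_smul_left]

lemma ipU_smul_right (c : 𝕂) (x y : Fin n → 𝕂) : ipU R x (c • y) = c * ipU R x y := by
  simp [ipU, ip2_smul_right]

lemma ipUS_add_left (x y z : Fin n → 𝕂) : ipUS Θ (x + y) z = ipUS Θ x z + ipUS Θ y z := by
  simp [ipUS, mulVec_add, ip2_add_left]

lemma ipUS_add_right (x y z : Fin n → 𝕂) : ipUS Θ x (y + z) = ipUS Θ x y + ipUS Θ x z := by
  simp [ipUS, mulVec_add, ip2_add_right]

lemma ipUS_smul_left (c : 𝕂) (x y : Fin n → 𝕂) : ipUS Θ (c • x) y = star c * ipUS Θ x y := by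
  simp [ipUS, mulVec_smul, ip2_smul_left]

lemma ipUS_smul_right (c : 𝕂) (x y : Fin n → 𝕂) : ipUS Θ x (c • y) = c * ipUS Θ x y := by
  simp [ipUS, mulVec_smul, ip2_smul_right]

lemma ipUS_conj (x y : Fin n → 𝕂) : ipUS Θ y x = star (ipUS Θ x y) :=
  ip2_conj _ _

lemma ipU_conj (hR : R.IsHermitian) (x y : Fin n → 𝕂) : ipU R y x = star (ipU R x y) := by
  rw [ipU, ipU, ← ip2_conj]
  show ip2 (R *ᵥ y) x = ip2 y (R *ᵥ x)
  rw [ip2, ip2, star_mulVec, hR.eq, dotProduct_mulVec]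
end aux2

section aux3
variable {n k : ℕ} (R : Matrix (Fin n) (Fin n) 𝕂) (Θ : Matrix (Fin k) (Fin n) 𝕂)


lemma normUS_sq' (x : Fin n → 𝕂) : (normUS Θ x) ^ 2 = RCLike.re (ipUS Θ x x) :=
  Real.sq_sqrt (re_ip2_self_nonneg _)

lemma re_ipU_self_pos (hR : R.PosDef) {x : Fin n → 𝕂} (hx : x ≠ 0) :
    0 < RCLike.re (ipU R x x) := by
  have h := hR.dotProduct_mulVec_pos hx
  have h2 : ipU R x x = star (star x ⬝ᵥ (R *ᵥ x)) := by
    rw [ipU, show star x ⬝ᵥ (R *ᵥ x) = ip2 x (R *ᵥ x) from rfl, ← ip2_conj, ip2, star_mulVec,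
      hR.1.eq]
  rw [h2, RCLike.star_def, RCLike.conj_re]
  exact (RCLike.pos_iff.mp h).1

lemma re_ipU_self_nonneg (hR : R.PosDef) (x : Fin n → 𝕂) :
    0 ≤ RCLike.re (ipU R x x) := by
  rcases eq_or_ne x 0 with h | h
  · simp [h, ipU, ip2, Matrix.mulVec_zero]
  · exact (re_ipU_self_pos R hR h).le

lemma normU_sq' (hR : R.PosDef) (x : Fin n → 𝕂) :
    (normU R x) ^ 2 = RCLike.re (ipU R x x) :=
  Real.sq_sqrt (re_ipU_self_nonneg R hR x)

lemma normU_pos' (hR : R.PosDef) {x : Fin n → 𝕂} (hx : x ≠ 0) : 0 < normU R x :=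
  Real.sqrt_pos.2 (re_ipU_self_pos R hR hx)

lemma ipU_self_real (hR : R.IsHermitian) (x : Fin n → 𝕂) :
    ipU R x x = ((RCLike.re (ipU R x x) : ℝ) : 𝕂) :=
  (RCLike.conj_eq_iff_re.mp (ipU_conj R hR x x).symm).symm

lemma ipUS_self_real (x : Fin n → 𝕂) :
    ipUS Θ x x = ((RCLike.re (ipUS Θ x x) : ℝ) : 𝕂) :=
  (RCLike.conj_eq_iff_re.mp (ipUS_conj Θ x x).symm).symm

lemma re_smul_smul (c : 𝕂) (f : (Fin n → 𝕂) → (Fin n → 𝕂) → 𝕂)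
    (hl : ∀ x y, f (c • x) y = star c * f x y) (hr : ∀ x y, f x (c • y) = c * f x y)
    (x : Fin n → 𝕂) :
    RCLike.re (f (c • x) (c • x)) = ‖c‖ ^ 2 * RCLike.re (f x x) := by
  rw [hl, hr, ← mul_assoc, RCLike.star_def, RCLike.conj_mul, ← RCLike.ofReal_pow,
    ← RCLike.real_smul_eq_coe_mul, RCLike.smul_re]

lemma normU_smul' (c : 𝕂) (x : Fin n → 𝕂) : normU R (c • x) = ‖c‖ * normU R x := by
  rw [normU, normU, re_smul_smul c (ipU R) (ipU_smul_left R c) (ipU_smul_right R c),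
    Real.sqrt_mul (sq_nonneg _), Real.sqrt_sq (norm_nonneg _)]

lemma normUS_smul' (c : 𝕂) (x : Fin n → 𝕂) : normUS Θ (c • x) = ‖c‖ * normUS Θ x := by
  rw [normUS, normUS, re_smul_smul c (ipUS Θ) (ipUS_smul_left Θ c) (ipUS_smul_right Θ c),
    Real.sqrt_mul (sq_nonneg _), Real.sqrt_sq (norm_nonneg _)]

lemma continuous_normUS : Continuous (normUS Θ) := by
  apply Real.continuous_sqrt.comp
  apply RCLike.continuous_re.comp
  have h1 : Continuous fun x : Fin n → 𝕂 => Θ *ᵥ x := continuous_const.matrix_mulVec continuous_id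
  exact Continuous.dotProduct h1.star h1

lemma continuous_normU : Continuous (normU R) := by
  apply Real.continuous_sqrt.comp
  apply RCLike.continuous_re.comp
  have h1 : Continuous fun x : Fin n → 𝕂 => R *ᵥ x := continuous_const.matrix_mulVec continuous_id
  exact Continuous.dotProduct h1.star continuous_id
end aux3

section polar
variable {n k : ℕ} (R : Matrix (Fin n) (Fin n) 𝕂) (Θ : Matrix (Fin k) (Fin n) 𝕂)

lemma herm_bound (hR : R.PosDef) (V : Submodule 𝕂 (Fin n → 𝕂)) (C : ℝ) (hC : 0 ≤ C)
    (hdiag : ∀ x ∈ V, ‖ipU R x x - ipUS Θ x x‖ ≤ C * (normU R x) ^ 2) :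
    ∀ x ∈ V, ∀ y ∈ V, ‖ipU R x y - ipUS Θ x y‖ ≤ C * normU R x * normU R y := by
  set B : (Fin n → 𝕂) → (Fin n → 𝕂) → 𝕂 := fun x y => ipU R x y - ipUS Θ x y with hB
  have hBaddl : ∀ x y z, B (x + y) z = B x z + B y z := by
    intro x y z; simp only [hB, ipU_add_left, ipUS_add_left]; ring
  have hBaddr : ∀ x y z, B x (y + z) = B x y + B x z := by
    intro x y z; simp only [hB, ipU_add_right, ipUS_add_right]; ring
  have hBsmull : ∀ (c : 𝕂) x y, B (c • x) y = star c * B x y := by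
    intro c x y; simp only [hB, ipU_smul_left, ipUS_smul_left]; ring
  have hBsmulr : ∀ (c : 𝕂) x y, B x (c • y) = c * B x y := by
    intro c x y; simp only [hB, ipU_smul_right, ipUS_smul_right]; ring
  have hBnegl : ∀ x y, B (-x) y = - B x y := by
    intro x y
    rw [show (-x) = (-1 : 𝕂) • x from (neg_one_smul 𝕂 x).symm, hBsmull]
    rw [star_neg, star_one, neg_one_mul]
  have hBnegr : ∀ x y, B x (-y) = - B x y := by
    intro x y
    rw [show (-y) = (-1 : 𝕂) • y from (neg_one_smul 𝕂 y).symm, hBsmulr, neg_one_mul]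
  have hBherm : ∀ x y, B y x = star (B x y) := by
    intro x y
    show ipU R y x - ipUS Θ y x = star (ipU R x y - ipUS Θ x y)
    rw [ipU_conj R hR.1, ipUS_conj, star_sub]
  have hre_st : ∀ x y, RCLike.re (B y x) = RCLike.re (B x y) := by
    intro x y; rw [hBherm, RCLike.star_def, RCLike.conj_re]
  have hexp : ∀ x y, RCLike.re (B (x + y) (x + y)) =
      RCLike.re (B x x) + RCLike.re (B y y) + 2 * RCLike.re (B x y) := by
    intro x y
    rw [hBaddl, hBaddr, hBaddr]
    simp only [map_add]
    rw [hre_st x y]; ring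
  have hexp' : ∀ x y, RCLike.re (B (x - y) (x - y)) =
      RCLike.re (B x x) + RCLike.re (B y y) - 2 * RCLike.re (B x y) := by
    intro x y
    rw [sub_eq_add_neg, hexp]
    have h1 : B (-y) (-y) = B y y := by rw [hBnegl, hBnegr, neg_neg]
    have h2 : RCLike.re (B x (-y)) = - RCLike.re (B x y) := by rw [hBnegr]; simp
    rw [h1, h2]; ring
  have hNpar : ∀ x y, (normU R (x + y)) ^ 2 + (normU R (x - y)) ^ 2 =
      2 * (normU R x) ^ 2 + 2 * (normU R y) ^ 2 := by
    intro x y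
    have hst : ∀ a b : Fin n → 𝕂, RCLike.re (ipU R b a) = RCLike.re (ipU R a b) := by
      intro a b; rw [ipU_conj R hR.1, RCLike.star_def, RCLike.conj_re]
    have hneg : ∀ a b : Fin n → 𝕂, ipU R a (-b) = - ipU R a b := by
      intro a b; rw [show (-b) = (-1 : 𝕂) • b from (neg_one_smul 𝕂 b).symm, ipU_smul_right,
        neg_one_mul]
    have hnegl : ∀ a b : Fin n → 𝕂, ipU R (-a) b = - ipU R a b := by
      intro a b
      rw [show (-a) = (-1 : 𝕂) • a from (neg_one_smul 𝕂 a).symm, ipU_smul_left,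
        star_neg, star_one, neg_one_mul]
    rw [normU_sq' R hR, normU_sq' R hR, normU_sq' R hR, normU_sq' R hR,
      sub_eq_add_neg, ipU_add_left, ipU_add_right, ipU_add_right,
      ipU_add_left, ipU_add_right, ipU_add_right]
    simp only [hneg, hnegl, map_add, map_neg, neg_neg]
    rw [hst x y]; ring
  have keyre : ∀ x ∈ V, ∀ y ∈ V, RCLike.re (B x y) ≤
      C / 2 * ((normU R x) ^ 2 + (normU R y) ^ 2) := by
    intro x hx y hy
    have hb1 : ‖B (x + y) (x + y)‖ ≤ C * (normU R (x + y)) ^ 2 :=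
      hdiag (x + y) (V.add_mem hx hy)
    have hb2 : ‖B (x - y) (x - y)‖ ≤ C * (normU R (x - y)) ^ 2 :=
      hdiag (x - y) (V.sub_mem hx hy)
    have e1 : RCLike.re (B (x + y) (x + y)) ≤ ‖B (x + y) (x + y)‖ := RCLike.re_le_norm _
    have e2 : -‖B (x - y) (x - y)‖ ≤ RCLike.re (B (x - y) (x - y)) :=
      (abs_le.mp (le_trans (RCLike.abs_re_le_norm _) (le_refl _))).1
    have hA := hexp x y
    have hA' := hexp' x y
    have hsum : C * (normU R (x + y)) ^ 2 + C * (normU R (x - y)) ^ 2 =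
        C * (2 * (normU R x) ^ 2 + 2 * (normU R y) ^ 2) := by
      rw [← mul_add, hNpar]
    nlinarith [hb1, hb2, e1, e2]
  have keynorm : ∀ x ∈ V, ∀ y ∈ V, ‖B x y‖ ≤
      C / 2 * ((normU R x) ^ 2 + (normU R y) ^ 2) := by
    intro x hx y hy
    rcases eq_or_ne (B x y) 0 with h0 | h0
    · rw [h0, norm_zero]
      positivity
    · set θ : 𝕂 := B x y / (‖B x y‖ : 𝕂) with hθ
      have hnB : (0:ℝ) < ‖B x y‖ := norm_pos_iff.mpr h0
      have hrot : B (θ • x) y = (‖B x y‖ : 𝕂) := by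
        rw [hBsmull, hθ, star_div₀, RCLike.star_def, RCLike.conj_ofReal, div_mul_eq_mul_div,
          RCLike.conj_mul, ← RCLike.ofReal_pow]
        rw [show ((‖B x y‖ ^ 2 : ℝ) : 𝕂) = ((‖B x y‖ : ℝ) : 𝕂) * ((‖B x y‖ : ℝ) : 𝕂) by
          push_cast; ring]
        rw [mul_div_assoc, div_self (by exact_mod_cast hnB.ne'), mul_one]
      have hθnorm : ‖θ‖ = 1 := by
        rw [hθ, norm_div, RCLike.norm_ofReal, abs_of_nonneg (norm_nonneg _),
          div_self hnB.ne']
      have h1 := keyre (θ • x) (V.smul_mem θ hx) y hy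
      rw [hrot, normU_smul', hθnorm, one_mul] at h1
      have : RCLike.re ((‖B x y‖ : 𝕂)) = ‖B x y‖ := RCLike.ofReal_re _
      linarith [this ▸ h1]
  intro x hx y hy
  show ‖B x y‖ ≤ C * normU R x * normU R y
  rcases eq_or_ne x 0 with h0 | h0
  · have : B x y = 0 := by
      rw [h0, show (0 : Fin n → 𝕂) = (0 : 𝕂) • (0 : Fin n → 𝕂) by simp, hBsmull]; simp
    rw [this, norm_zero]
    have : normU R x = 0 := by
      rw [h0, normU, show ipU R 0 0 = 0 by simp [ipU, ip2, Matrix.mulVec_zero]]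
      simp
    rw [this]
    simp
  rcases eq_or_ne y 0 with h1 | h1
  · have : B x y = 0 := by
      rw [h1, show (0 : Fin n → 𝕂) = (0 : 𝕂) • (0 : Fin n → 𝕂) by simp, hBsmulr]; simp
    rw [this, norm_zero]
    have : normU R y = 0 := by
      rw [h1, normU, show ipU R 0 0 = 0 by simp [ipU, ip2, Matrix.mulVec_zero]]
      simp
    rw [this, mul_zero]
  · have hNx := normU_pos' R hR h0
    have hNy := normU_pos' R hR h1
    set t : ℝ := Real.sqrt (normU R y / normU R x) with ht
    have ht0 : 0 < t := Real.sqrt_pos.2 (by positivity)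
    have ht2 : t ^ 2 = normU R y / normU R x := Real.sq_sqrt (by positivity)
    have hx' := V.smul_mem ((t : 𝕂)) hx
    have hy' := V.smul_mem (((t⁻¹ : ℝ) : 𝕂)) hy
    have h2 := keynorm _ hx' _ hy'
    have hBval : B ((t : 𝕂) • x) (((t⁻¹ : ℝ) : 𝕂) • y) = B x y := by
      rw [hBsmull, hBsmulr, RCLike.star_def, RCLike.conj_ofReal, ← mul_assoc,
        ← RCLike.ofReal_mul, mul_inv_cancel₀ ht0.ne']
      simp
    rw [hBval, normU_smul', normU_smul', RCLike.norm_ofReal, RCLike.norm_ofReal,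
      abs_of_pos ht0, abs_of_pos (by positivity : (0:ℝ) < t⁻¹)] at h2
    have hfin : C / 2 * ((t * normU R x) ^ 2 + (t⁻¹ * normU R y) ^ 2) =
        C * normU R x * normU R y := by
      have e1 : (t * normU R x) ^ 2 = normU R y * normU R x := by
        rw [mul_pow, ht2]; field_simp
      have e2 : (t⁻¹ * normU R y) ^ 2 = normU R x * normU R y := by
        rw [mul_pow, inv_pow, ht2]; field_simp
      rw [e1, e2]; ring
    rw [hfin] at h2
    exact h2
end polar

set_option maxHeartbeats 1000000

open MeasureTheory in
/-- A posteriori upper bound for the embedding constant. -/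
theorem embedding_constant_aposteriori_bound {𝕂 : Type*} [RCLike 𝕂] {n k ks : ℕ}
    (R : Matrix (Fin n) (Fin n) 𝕂) (hR : R.PosDef)
    (εs δs : ℝ) (hεs0 : 0 ≤ εs) (hεs1 : εs < 1) (hδs0 : 0 ≤ δs) (hδs1 : δs ≤ 1)
    (V : Submodule 𝕂 (Fin n → 𝕂)) (hV : V ≠ ⊥)
    (Θ : Matrix (Fin k) (Fin n) 𝕂)
    {Ω : Type*} [MeasurableSpace Ω] (Pr : Measure Ω) [IsProbabilityMeasure Pr]
    (Θs : Ω → Matrix (Fin ks) (Fin n) 𝕂)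
    (hΘs : ∀ x ∈ V,
      MeasurableSet
        {ω | |(normU R x) ^ 2 - (normUS (Θs ω) x) ^ 2| ≤ εs * (normU R x) ^ 2} ∧
      ENNReal.ofReal (1 - δs)
        ≤ Pr {ω | |(normU R x) ^ 2 - (normUS (Θs ω) x) ^ 2| ≤ εs * (normU R x) ^ 2}) :
    ENNReal.ofReal (1 - δs)
      ≤ Pr {ω |
          (∀ x ∈ V, x ≠ 0 → 0 < normUS (Θs ω) x) →
          omegaBar εs Θ (Θs ω) V < 1 →
          IsEmb R Θ V (omegaBar εs Θ (Θs ω) V)} := by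
  classical
  obtain ⟨v, hvV, hv0⟩ := (Submodule.ne_bot_iff V).mp hV
  set S : Set (Fin n → 𝕂) := {x | x ∈ V ∧ ‖x‖ = 1} with hS
  have hScompact : IsCompact S := by
    have h1 : S = (V : Set (Fin n → 𝕂)) ∩ Metric.sphere 0 1 := by
      ext x
      simp [hS, Set.mem_inter_iff, mem_sphere_iff_norm]
    rw [h1]
    exact (isCompact_sphere 0 1).inter_left V.closed_of_finiteDimensional
  have hnormalize : ∀ x : Fin n → 𝕂, x ∈ V → x ≠ 0 → ((‖x‖ : ℝ) : 𝕂)⁻¹ • x ∈ S := by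
    intro x hx h0
    refine ⟨V.smul_mem _ hx, ?_⟩
    rw [norm_smul, norm_inv, RCLike.norm_ofReal, abs_of_nonneg (norm_nonneg _),
      inv_mul_cancel₀ (norm_ne_zero_iff.mpr h0)]
  have hSne : S.Nonempty := ⟨_, hnormalize v hvV hv0⟩
  have hSne0 : ∀ x ∈ S, x ≠ 0 := by
    intro x hx
    intro h
    rw [h] at hx
    simp [hS] at hx
  set g : (Fin n → 𝕂) → ℝ := fun x => (normUS Θ x / normU R x) ^ 2 with hg
  have hgcont : ContinuousOn g S := by
    apply ContinuousOn.pow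
    apply ContinuousOn.div (continuous_normUS Θ).continuousOn
      (continuous_normU R).continuousOn
    intro x hx
    exact (normU_pos' R hR (hSne0 x hx)).ne'
  obtain ⟨xh, hxhS, hxhmax⟩ := hScompact.exists_isMaxOn hSne hgcont
  obtain ⟨xl, hxlS, hxlmin⟩ := hScompact.exists_isMinOn hSne hgcont
  have hratio_smul : ∀ {p : ℕ} (M : Matrix (Fin p) (Fin n) 𝕂) (c : 𝕂), c ≠ 0 →
      ∀ x, (normUS Θ (c • x) / normUS M (c • x)) ^ 2
        = (normUS Θ x / normUS M x) ^ 2 := by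
    intro p M c hc x
    rw [normUS_smul', normUS_smul',
      mul_div_mul_left _ _ (norm_ne_zero_iff.mpr hc)]
  have hg_smul : ∀ (c : 𝕂), c ≠ 0 → ∀ x, g (c • x) = g x := by
    intro c hc x
    rw [hg]
    simp only
    rw [normUS_smul', normU_smul', mul_div_mul_left _ _ (norm_ne_zero_iff.mpr hc)]
  have hcinv : ∀ x : Fin n → 𝕂, x ≠ 0 → ((‖x‖ : ℝ) : 𝕂)⁻¹ ≠ 0 := by
    intro x h0
    simp only [ne_eq, inv_eq_zero, RCLike.ofReal_eq_zero]
    exact norm_ne_zero_iff.mpr h0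
  have hg_ext : ∀ x ∈ V, x ≠ 0 → g xl ≤ g x ∧ g x ≤ g xh := by
    intro x hx h0
    have hmem := hnormalize x hx h0
    have heq := hg_smul _ (hcinv x h0) x
    exact ⟨heq ▸ hxlmin hmem, heq ▸ hxhmax hmem⟩
  set x' : (Fin n → 𝕂) := if 1 - g xl ≥ g xh - 1 then xl else xh with hx'def
  have hx'S : x' ∈ S := by
    rw [hx'def]
    split <;> assumption
  obtain ⟨-, hprob⟩ := hΘs x' hx'S.1
  refine le_trans hprob (measure_mono ?_)
  intro ω hω
  simp only [Set.mem_setOf_eq] at hω ⊢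
  intro hpos hωlt
  set T : Set ℝ := {t | ∃ x ∈ V, x ≠ 0 ∧ t = (normUS Θ x / normUS (Θs ω) x) ^ 2} with hT
  have hωbdef : omegaBar εs Θ (Θs ω) V
      = max (1 - (1 - εs) * sInf T) ((1 + εs) * sSup T - 1) := rfl
  set ωb : ℝ := omegaBar εs Θ (Θs ω) V with hωb
  have hTmem : ∀ x ∈ V, x ≠ 0 → (normUS Θ x / normUS (Θs ω) x) ^ 2 ∈ T := by
    intro x hx h0
    exact ⟨x, hx, h0, rfl⟩
  have hTbddBelow : BddBelow T := by
    refine ⟨0, ?_⟩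
    rintro t ⟨x, hx, h0, rfl⟩
    positivity
  have hTne : T.Nonempty := ⟨_, hTmem v hvV hv0⟩
  have hInf0 : 0 ≤ sInf T := le_csInf hTne (by rintro t ⟨x, hx, h0, rfl⟩; positivity)
  have hTimage : T = (fun x => (normUS Θ x / normUS (Θs ω) x) ^ 2) '' S := by
    ext t
    constructor
    · rintro ⟨x, hx, h0, rfl⟩
      exact ⟨_, hnormalize x hx h0, hratio_smul (Θs ω) _ (hcinv x h0) x⟩
    · rintro ⟨x, hx, rfl⟩
      exact ⟨x, hx.1, hSne0 x hx, rfl⟩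
  have hTbddAbove : BddAbove T := by
    rw [hTimage]
    refine (hScompact.image_of_continuousOn ?_).bddAbove
    apply ContinuousOn.pow
    apply ContinuousOn.div (continuous_normUS Θ).continuousOn
      (continuous_normUS (Θs ω)).continuousOn
    intro x hx
    exact (hpos x hx.1 (hSne0 x hx)).ne'
  -- the two claims
  have hxlV : xl ∈ V := hxlS.1
  have hxhV : xh ∈ V := hxhS.1
  have hxl0 : xl ≠ 0 := hSne0 xl hxlS
  have hxh0 : xh ≠ 0 := hSne0 xh hxhS
  have hqlpos : 0 < normUS (Θs ω) xl := hpos xl hxlV hxl0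
  have hqhpos : 0 < normUS (Θs ω) xh := hpos xh hxhV hxh0
  have hNlpos : 0 < normU R xl := normU_pos' R hR hxl0
  have hNhpos : 0 < normU R xh := normU_pos' R hR hxh0
  have hglval : g xl = normUS Θ xl ^ 2 / normU R xl ^ 2 := by rw [hg]; simp [div_pow]
  have hghval : g xh = normUS Θ xh ^ 2 / normU R xh ^ 2 := by rw [hg]; simp [div_pow]
  have hmax1 : 1 - (1 - εs) * sInf T ≤ ωb := hωbdef ▸ le_max_left _ _
  have hmax2 : (1 + εs) * sSup T - 1 ≤ ωb := hωbdef ▸ le_max_right _ _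
  have claims : 1 - ωb ≤ g xl ∧ g xh ≤ 1 + ωb := by
    by_cases hcase : 1 - g xl ≥ g xh - 1
    · have hx'eq : x' = xl := if_pos hcase
      rw [hx'eq] at hω
      have hev := abs_le.mp hω
      have hql2 : (1 - εs) * normU R xl ^ 2 ≤ normUS (Θs ω) xl ^ 2 := by nlinarith [hev.2]
      have ha : sInf T ≤ (normUS Θ xl / normUS (Θs ω) xl) ^ 2 :=
        csInf_le hTbddBelow (hTmem xl hxlV hxl0)
      rw [div_pow] at ha
      have hpl2 : sInf T * normUS (Θs ω) xl ^ 2 ≤ normUS Θ xl ^ 2 :=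
        (le_div_iff₀ (by positivity)).mp ha
      have hchain : sInf T * ((1 - εs) * normU R xl ^ 2) ≤ normUS Θ xl ^ 2 :=
        le_trans (mul_le_mul_of_nonneg_left hql2 hInf0) hpl2
      have hgl : (1 - εs) * sInf T ≤ g xl := by
        rw [hglval, le_div_iff₀ (by positivity)]
        nlinarith [hchain]
      have c1 : 1 - ωb ≤ g xl := by linarith
      exact ⟨c1, by linarith⟩
    · have hx'eq : x' = xh := if_neg hcase
      rw [hx'eq] at hω
      have hev := abs_le.mp hω
      have hqh2 : normUS (Θs ω) xh ^ 2 ≤ (1 + εs) * normU R xh ^ 2 := by nlinarith [hev.1]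
      have hb : (normUS Θ xh / normUS (Θs ω) xh) ^ 2 ≤ sSup T :=
        le_csSup hTbddAbove (hTmem xh hxhV hxh0)
      have hb0 : 0 ≤ sSup T := le_trans (by positivity) hb
      rw [div_pow] at hb
      have hph2 : normUS Θ xh ^ 2 ≤ sSup T * normUS (Θs ω) xh ^ 2 :=
        (div_le_iff₀ (by positivity)).mp hb
      have hchain : normUS Θ xh ^ 2 ≤ sSup T * ((1 + εs) * normU R xh ^ 2) :=
        le_trans hph2 (mul_le_mul_of_nonneg_left hqh2 hb0)
      have hgh : g xh ≤ (1 + εs) * sSup T := by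
        rw [hghval, div_le_iff₀ (by positivity)]
        nlinarith [hchain]
      have c2 : g xh ≤ 1 + ωb := by linarith
      refine ⟨by linarith [hg_ext xl hxlV hxl0, hg_ext xh hxhV hxh0], c2⟩
  have hgl_le_gh : g xl ≤ g xh := by
    have := hg_ext xl hxlV hxl0
    exact this.2
  have hωb0 : 0 ≤ ωb := by linarith [claims.1, claims.2]
  -- quadratic bound for all x in V
  have quad : ∀ x ∈ V, ‖ipU R x x - ipUS Θ x x‖ ≤ ωb * normU R x ^ 2 := by
    intro x hx
    rcases eq_or_ne x 0 with h0 | h0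
    · rw [h0]
      have e1 : ipU R (0 : Fin n → 𝕂) 0 = 0 := by simp [ipU, ip2, Matrix.mulVec_zero]
      have e2 : ipUS Θ (0 : Fin n → 𝕂) 0 = 0 := by simp [ipUS, ip2, Matrix.mulVec_zero]
      rw [e1, e2, sub_zero, norm_zero]
      positivity
    · have hN : 0 < normU R x := normU_pos' R hR h0
      have hgx := hg_ext x hx h0
      have h1 : 1 - ωb ≤ g x := le_trans claims.1 hgx.1
      have h2 : g x ≤ 1 + ωb := le_trans hgx.2 claims.2
      have eU : ipU R x x = ((normU R x ^ 2 : ℝ) : 𝕂) := by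
        rw [ipU_self_real R hR.1, normU_sq' R hR]
      have eS : ipUS Θ x x = ((normUS Θ x ^ 2 : ℝ) : 𝕂) := by
        rw [ipUS_self_real Θ, normUS_sq']
      rw [eU, eS, ← RCLike.ofReal_sub, RCLike.norm_ofReal]
      have hp2 : normUS Θ x ^ 2 = g x * normU R x ^ 2 := by
        rw [hg]
        simp only
        rw [div_pow, div_mul_cancel₀ _ (by positivity : normU R x ^ 2 ≠ 0)]
      rw [abs_le]
      constructor <;> nlinarith [hp2, h1, h2, sq_nonneg (normU R x)]
  exact herm_bound R Θ hR V ωb hωb0 quad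

end
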